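/- Suppose every countable-chain-condition partial order has property K₃ (i.e., 𝒦₃-for-posets: every ccc poset has the Knaster property of dimension 3). Fix a coherent e : [ω₁]²→ω with (coh1)-(coh3), a tower T = {t_α : α < ω₁} and I ∈ [ω]^ω with t_α ∩ I_m ≠ ∅ for all α, m. Define π : [ω₁]³ → 2 by: for α < min{β,γ}, π(α,β,γ) = 0 iff (e(α,β) = e(α,γ) implies t_β ∩ I_{e(α,β)} ⊆ t_γ or t_γ ∩ I_{e(α,β)} ⊆ t_β). Then the poset ℋ₀^π of finite 0-homogeneous sets ordered by reverse inclusion is ccc. -/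

import Mathlib

noncomputable def omega1 : Ordinal.{0} := (Cardinal.aleph 1).ord

/-- `S` is 0-homogeneous for the coloring `π : [ω₁]³ → 2` defined from `e`, the tower `t`
and the interval decomposition given by `I`: for `α < β < γ` in `S`,
if `e(α,β) = e(α,γ)` then `t_β ∩ I_{e(α,β)} ⊆ t_γ` or `t_γ ∩ I_{e(α,β)} ⊆ t_β`. -/
def Homog3 (e : Ordinal → Ordinal → ℕ) (t : Ordinal → Set ℕ) (I : ℕ → ℕ)
    (S : Set Ordinal) : Prop :=
  ∀ α ∈ S, ∀ β ∈ S, ∀ γ ∈ S, α < β → β < γ → e α β = e α γ →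
    (t β ∩ Set.Ico (I (e α β)) (I (e α β + 1)) ⊆ t γ ∨
     t γ ∩ Set.Ico (I (e α β)) (I (e α β + 1)) ⊆ t β)

/-!
Pass to an uncountable subfamily with a root `R` such that each point outside `R` lies in only
countably many members, and on which the bound `m` of the `e`-values inside a member and the set
of profiles of its points (the values `e(r, x)` and comparisons `r < x` for `r ∈ R`, and `t_x`
below `I (m + 1)`) are constant. Choose countably many members with pairwise disjoint tails
`F \ R`, bound them by some `δ < ω₁`, and take a member `H` whose tail lies above `δ`.
Injectivity of `e(·, y)` and the tower property leave only finitely many `a` with `e(a, y) ≤ m`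
for some `a < y ∈ H`, or with `t_c \ t_b` meeting `I_{e(a,b)}` for some `a < b < c` in `H`.
Some earlier member `G` has its tail outside this finite set, and then `G ∪ H` is
0-homogeneous: in a new triple `α < β < γ` with `β ∈ G` and `γ ∈ H`, the point `α` lies in
`R`, and `γ` is compared with `β` through the point of `G` with the same profile as `γ`.
-/

open Set

section Countability

variable {α β : Type*}

theorem Set.nonempty_of_not_countable {S : Set α} (hS : ¬S.Countable) : S.Nonempty :=
  nonempty_iff_ne_empty.2 fun h => hS (h ▸ countable_empty)

theorem Set.not_countable_diff {S T : Set α} (hS : ¬S.Countable) (hT : T.Countable) :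
    ¬(S \ T).Countable := fun h =>
  hS ((h.union hT).mono (by rw [sdiff_union_self]; exact subset_union_left))

theorem Set.exists_not_countable_fiber [Countable β] {S : Set α} (hS : ¬S.Countable)
    (f : α → β) : ∃ b, ¬{x ∈ S | f x = b}.Countable := by
  by_contra! h
  refine hS ((countable_iUnion h).mono fun x hx => ?_)
  exact mem_iUnion.2 ⟨f x, hx, rfl⟩

end Countability

theorem countable_Iio_of_lt_omega1 {δ : Ordinal.{0}} (hδ : δ < omega1) : (Iio δ).Countable := by
  rw [← Cardinal.le_aleph0_iff_set_countable, Cardinal.mk_Iio_ordinal, Cardinal.lift_le_aleph0,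
    ← Cardinal.lt_aleph_one_iff]
  exact Cardinal.lt_ord.1 hδ

theorem exists_lt_omega1_subset_Iio {C : Set Ordinal.{0}} (hC : C.Countable)
    (hCω : C ⊆ Iio omega1) : ∃ δ < omega1, C ⊆ Iio δ := by
  have := hC.to_subtype
  refine ⟨⨆ x : C, Order.succ x.1, ?_, fun x hx => ?_⟩
  · rw [omega1, Cardinal.ord_aleph] at hCω ⊢
    exact Ordinal.iSup_lt_omega_one fun x => (Cardinal.isSuccLimit_omega 1).succ_lt (hCω x.2)
  · exact (Order.lt_succ x).trans_le (Ordinal.le_iSup (fun x : C => Order.succ x.1) ⟨x, hx⟩)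

theorem exists_not_countable_rooted_subfamily {α : Type*} {𝒜 : Set (Finset α)}
    (h𝒜 : ¬𝒜.Countable) :
    ∃ ℬ ⊆ 𝒜, ∃ R : Finset α, ¬ℬ.Countable ∧ (∀ F ∈ ℬ, R ⊆ F) ∧
      ∀ x ∉ R, {F ∈ ℬ | x ∈ F}.Countable := by
  classical
  obtain ⟨N, hN⟩ := exists_not_countable_fiber h𝒜 Finset.card
  set 𝒜N := {F ∈ 𝒜 | F.card = N}
  let P : ℕ → Prop := fun k =>
    ∃ R : Finset α, R.card = k ∧ ¬{F ∈ 𝒜N | R ⊆ F}.Countable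
  have hPN : ∀ k, P k → k ≤ N := by
    rintro _ ⟨R, rfl, hR⟩
    obtain ⟨F, ⟨-, rfl⟩, hRF⟩ := nonempty_of_not_countable hR
    exact Finset.card_le_card hRF
  obtain ⟨R, hRk, hR⟩ : P (Nat.findGreatest P N) :=
    Nat.findGreatest_spec (Nat.zero_le N) ⟨∅, rfl, by simpa using hN⟩
  refine ⟨{F ∈ 𝒜N | R ⊆ F}, fun F hF => hF.1.1, R, hR, fun F hF => hF.2, fun x hx => ?_⟩
  by_contra hxR
  have hP : P (R.card + 1) := by
    refine ⟨insert x R, Finset.card_insert_of_notMem hx, fun hc => hxR (hc.mono ?_)⟩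
    rintro F ⟨⟨hF, hRF⟩, hxF⟩
    exact ⟨hF, Finset.insert_subset hxF hRF⟩
  exact Nat.findGreatest_is_greatest (by omega) (hPN _ hP) hP

section Tails

variable {α : Type*} {ℬ : Set (Finset α)} {R : Finset α}

theorem not_countable_disjoint_tail (hℬ : ¬ℬ.Countable)
    (hthin : ∀ x ∉ R, {F ∈ ℬ | x ∈ F}.Countable) {C : Set α} (hC : C.Countable) :
    ¬{F ∈ ℬ | Disjoint (↑F \ ↑R) C}.Countable := by
  refine fun h => hℬ ((h.union ((hC.mono sdiff_subset).biUnion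
    fun x (hx : x ∈ C \ ↑R) => hthin x hx.2)).mono fun F hF => ?_)
  by_cases hd : Disjoint (↑F \ ↑R) C
  · exact Or.inl ⟨hF, hd⟩
  · obtain ⟨x, ⟨hxF, hxR⟩, hxC⟩ := not_disjoint_iff.1 hd
    exact Or.inr (mem_biUnion ⟨hxC, hxR⟩ ⟨hF, hxF⟩)

theorem exists_seq_disjoint_tail (hℬ : ¬ℬ.Countable)
    (hthin : ∀ x ∉ R, {F ∈ ℬ | x ∈ F}.Countable) :
    ∃ g : ℕ → Finset α, (∀ n, g n ∈ ℬ) ∧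
      ∀ m n, m < n → Disjoint (↑(g m) \ ↑R : Set α) (↑(g n) \ ↑R) := by
  refine exists_seq_of_forall_finset_exists (· ∈ ℬ)
    (fun F F' => Disjoint (↑F \ ↑R : Set α) (↑F' \ ↑R)) fun s _ => ?_
  obtain ⟨F, hF, hFs⟩ := nonempty_of_not_countable (not_countable_disjoint_tail hℬ hthin
    (s.countable_toSet.biUnion fun F' _ => F'.countable_toSet))
  exact ⟨F, hF, fun F' hF' => ((hFs.mono_right (subset_biUnion_of_mem hF')).symm.mono_left
    sdiff_subset)⟩

theorem exists_disjoint_tail_of_finite {g : ℕ → Finset α}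
    (hg : ∀ m n, m < n → Disjoint (↑(g m) \ ↑R : Set α) (↑(g n) \ ↑R)) {S : Set α}
    (hS : S.Finite) : ∃ n, Disjoint (↑(g n) \ ↑R) S := by
  by_contra! h
  choose p hp using fun n => not_disjoint_iff.1 (h n)
  have := hS.to_subtype
  obtain ⟨m, n, hmn, hpmn⟩ :=
    Finite.exists_ne_map_eq_of_infinite fun n => (⟨p n, (hp n).2⟩ : S)
  rcases hmn.lt_or_gt with hlt | hlt
  · exact (hg m n hlt).ne_of_mem (hp m).1 (hp n).1 (congrArg Subtype.val hpmn)
  · exact (hg n m hlt).ne_of_mem (hp n).1 (hp m).1 (congrArg Subtype.val hpmn).symm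

end Tails

theorem exists_pair_lt_tail_disjoint {ℬ : Set (Finset Ordinal.{0})} {R : Finset Ordinal}
    (hℬ : ¬ℬ.Countable) (hω : ∀ F ∈ ℬ, (↑F : Set Ordinal) ⊆ Iio omega1)
    (hthin : ∀ x ∉ R, {F ∈ ℬ | x ∈ F}.Countable) (bad : Finset Ordinal → Set Ordinal)
    (hbad : ∀ H ∈ ℬ, (bad H).Finite) :
    ∃ G ∈ ℬ, ∃ H ∈ ℬ, G ≠ H ∧ (∀ x ∈ G, ∀ y ∈ H, y ∉ R → x < y) ∧
      Disjoint (↑G \ ↑R) (bad H) := by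
  obtain ⟨g, hgℬ, hg⟩ := exists_seq_disjoint_tail hℬ hthin
  obtain ⟨δ, hδ, hgδ⟩ := exists_lt_omega1_subset_Iio
    (countable_iUnion fun n => (g n).countable_toSet) (iUnion_subset fun n => hω _ (hgℬ n))
  have hsmall : {F : Finset Ordinal | F ⊆ R}.Countable :=
    R.powerset.countable_toSet.mono fun F hF => Finset.mem_powerset.2 hF
  obtain ⟨H, ⟨hH, hHδ⟩, hHR⟩ := nonempty_of_not_countable
    (not_countable_diff (not_countable_disjoint_tail hℬ hthin (countable_Iio_of_lt_omega1 hδ))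
      hsmall)
  obtain ⟨n, hn⟩ := exists_disjoint_tail_of_finite hg (hbad H hH)
  have hlt : ∀ x ∈ g n, ∀ y ∈ H, y ∉ R → x < y := fun x hx y hy hyR =>
    (hgδ (mem_iUnion_of_mem n hx)).trans_le (not_lt.1 (hHδ.notMem_of_mem_left ⟨hy, hyR⟩))
  refine ⟨g n, hgℬ n, H, hH, ?_, hlt, hn⟩
  rintro rfl
  obtain ⟨y, hy, hyR⟩ := Finset.not_subset.1 hHR
  exact lt_irrefl y (hlt y hy y hy hyR)

section Homogeneity

variable {e : Ordinal → Ordinal → ℕ} {t : Ordinal → Set ℕ} {I : ℕ → ℕ}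

theorem Homog3.comparable {S : Set Ordinal} (hS : Homog3 e t I S) {α β β' : Ordinal}
    (hα : α ∈ S) (hβ : β ∈ S) (hβ' : β' ∈ S) (hαβ : α < β) (hαβ' : α < β')
    (he : e α β' = e α β) :
    t β ∩ Ico (I (e α β)) (I (e α β + 1)) ⊆ t β' ∨
      t β' ∩ Ico (I (e α β)) (I (e α β + 1)) ⊆ t β := by
  rcases lt_trichotomy β β' with h | rfl | h
  · exact hS α hα β hβ β' hβ' hαβ h he.symm
  · exact Or.inl inter_subset_left
  · rw [← he]
    exact (hS α hα β' hβ' β hβ hαβ' h he).symm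

theorem Homog3.union {G H : Finset Ordinal} {m : ℕ} (hG : Homog3 e t I ↑G)
    (hH : Homog3 e t I ↑H) (hlt : ∀ x ∈ G, ∀ y ∈ H, y ∉ G → x < y)
    (hbound : ∀ a ∈ G, ∀ b ∈ G, e a b ≤ m)
    (hmatch : ∀ y ∈ H, y ∉ G → ∃ x ∈ G,
      (∀ r ∈ G, r ∈ H → r < y → r < x ∧ e r x = e r y) ∧
        ∀ k ≤ m, t x ∩ Ico (I k) (I (k + 1)) = t y ∩ Ico (I k) (I (k + 1)))
    (hlow : ∀ a ∈ G, a ∉ H → ∀ y ∈ H, a < y → m < e a y)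
    (hsplit : ∀ a ∈ G, a ∉ H → ∀ b ∈ H, ∀ c ∈ H, a < b → b < c →
      t c ∩ Ico (I (e a b)) (I (e a b + 1)) ⊆ t b) :
    Homog3 e t I (↑G ∪ ↑H) := by
  have mem_G : ∀ x ∈ (↑G ∪ ↑H : Set Ordinal), ∀ y ∈ G, x < y → x ∈ G :=
    fun x hx y hy hxy => by_contra fun hxG => (hlt y hy x (hx.resolve_left hxG) hxG).not_gt hxy
  intro α hα β hβ γ hγ hαβ hβγ hαγ
  by_cases hγG : γ ∈ G
  · exact hG α (mem_G α hα γ hγG (hαβ.trans hβγ)) β (mem_G β hβ γ hγG hβγ) γ hγG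
      hαβ hβγ hαγ
  have hγH : γ ∈ H := hγ.resolve_left hγG
  by_cases hβH : β ∈ H
  · by_cases hαH : α ∈ H
    · exact hH α hαH β hβH γ hγH hαβ hβγ hαγ
    · exact Or.inr (hsplit α (hα.resolve_right hαH) hαH β hβH γ hγH hαβ hβγ)
  have hβG : β ∈ G := hβ.resolve_right hβH
  have hαG : α ∈ G := mem_G α hα β hβG hαβ
  have hαH : α ∈ H := by_contra fun hαH =>
    (hlow α hαG hαH γ hγH (hαβ.trans hβγ)).not_ge (hαγ ▸ hbound α hαG β hβG)
  obtain ⟨β', hβ'G, hrow, htrace⟩ := hmatch γ hγH hγG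
  obtain ⟨hαβ', he⟩ := hrow α hαG hαH (hαβ.trans hβγ)
  have htrace' := htrace _ (hbound α hαG β hβG)
  rcases hG.comparable hαG hβG hβ'G hαβ hαβ' (he.trans hαγ.symm) with h | h
  · exact Or.inl fun x hx => (htrace'.subset ⟨h hx, hx.2⟩).1
  · exact Or.inr (htrace' ▸ h)

end Homogeneity

section Profiles

variable (e : Ordinal → Ordinal → ℕ) (t : Ordinal → Set ℕ) (I : ℕ → ℕ)

noncomputable def edgeBound (F : Finset Ordinal) : ℕ :=
  (F ×ˢ F).sup fun p => e p.1 p.2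

open Classical in
noncomputable def profile (L : ℕ) (R : Finset Ordinal) (x : Ordinal) :
    (R → ℕ × Bool) × Finset ℕ :=
  (fun r => (e r x, decide (r.1 < x)), {n ∈ Finset.range L | n ∈ t x})

def lowSet (m : ℕ) (H : Finset Ordinal) : Set Ordinal :=
  ⋃ y ∈ H, {a | a < y ∧ e a y ≤ m}

def splitSet (H : Finset Ordinal) : Set Ordinal :=
  ⋃ b ∈ H, ⋃ c ∈ H,
    {a | a < b ∧ b < c ∧ ((t c \ t b) ∩ Ico (I (e a b)) (I (e a b + 1))).Nonempty}

variable {e t I}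

theorem le_edgeBound {F : Finset Ordinal} {a b : Ordinal} (ha : a ∈ F) (hb : b ∈ F) :
    e a b ≤ edgeBound e F :=
  Finset.le_sup (f := fun p => e p.1 p.2) (Finset.mk_mem_product ha hb)

theorem profile_eq_iff {L : ℕ} {R : Finset Ordinal} {x y : Ordinal} :
    profile e t L R x = profile e t L R y ↔
      (∀ r ∈ R, e r x = e r y ∧ (r < x ↔ r < y)) ∧ t x ∩ Iio L = t y ∩ Iio L := by
  simp [profile, funext_iff, Finset.ext_iff, Set.ext_iff]

end Profiles

section Finiteness

variable {e : Ordinal → Ordinal → ℕ} {t : Ordinal → Set ℕ} {I : ℕ → ℕ}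
  {H : Finset Ordinal}

theorem finite_setOf_lt_of_injOn {β : Ordinal} (hinj : InjOn (fun α => e α β) (Iio β))
    {S : Set ℕ} (hS : S.Finite) : {α | α < β ∧ e α β ∈ S}.Finite :=
  (hS.subset (image_subset_iff.2 fun _ h => h.2)).of_finite_image (hinj.mono fun _ h => h.1)

theorem finite_setOf_inter_Ico_nonempty (hI : StrictMono I) {S : Set ℕ} (hS : S.Finite) :
    {k | (S ∩ Ico (I k) (I (k + 1))).Nonempty}.Finite := by
  obtain ⟨B, hB⟩ := hS.bddAbove
  exact (finite_Iic B).subset fun k ⟨n, hnS, hn⟩ => (hI.id_le k).trans (hn.1.trans (hB hnS))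

theorem lowSet_finite (hinj : ∀ y ∈ H, InjOn (fun α => e α y) (Iio y)) (m : ℕ) :
    (lowSet e m H).Finite :=
  H.finite_toSet.biUnion fun y hy => finite_setOf_lt_of_injOn (hinj y hy) (finite_Iic m)

theorem splitSet_finite (hinj : ∀ y ∈ H, InjOn (fun α => e α y) (Iio y)) (hI : StrictMono I)
    (htower : ∀ b ∈ H, ∀ c ∈ H, b < c → (t c \ t b).Finite) :
    (splitSet e t I H).Finite := by
  refine H.finite_toSet.biUnion fun b hb => H.finite_toSet.biUnion fun c hc => ?_
  by_cases hbc : b < c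
  · exact (finite_setOf_lt_of_injOn (hinj b hb) (finite_setOf_inter_Ico_nonempty hI
      (htower b hb c hc hbc))).subset fun a ha => ⟨ha.1, ha.2.2⟩
  · exact finite_empty.subset fun a ha => hbc ha.2.1

end Finiteness

theorem Homog3.union_of_profile {e : Ordinal → Ordinal → ℕ} {t : Ordinal → Set ℕ}
    {I : ℕ → ℕ} (hI : Monotone I) {G H R : Finset Ordinal} {m : ℕ} (hG : Homog3 e t I ↑G)
    (hH : Homog3 e t I ↑H) (hRG : R ⊆ G) (hRH : R ⊆ H)
    (hlt : ∀ x ∈ G, ∀ y ∈ H, y ∉ R → x < y) (hm : edgeBound e G = m)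
    (hprof : H.image (profile e t (I (m + 1)) R) ⊆ G.image (profile e t (I (m + 1)) R))
    (hbad : Disjoint (↑G \ ↑R) (lowSet e m H ∪ splitSet e t I H)) :
    Homog3 e t I (↑G ∪ ↑H) := by
  have hGH : ∀ r ∈ G, r ∈ H → r ∈ R := fun r hr hrH =>
    by_contra fun hrR => lt_irrefl r (hlt r hr r hrH hrR)
  have hbad' : ∀ a ∈ G, a ∉ H → a ∉ lowSet e m H ∪ splitSet e t I H := fun a ha haH =>
    hbad.notMem_of_mem_left ⟨ha, fun haR => haH (hRH haR)⟩
  have hlow : ∀ a ∈ G, a ∉ H → ∀ y ∈ H, a < y → m < e a y := fun a ha haH y hy hay =>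
    not_le.1 fun h => hbad' a ha haH (Or.inl (mem_biUnion hy ⟨hay, h⟩))
  have hsplit : ∀ a ∈ G, a ∉ H → ∀ b ∈ H, ∀ c ∈ H, a < b → b < c →
      t c ∩ Ico (I (e a b)) (I (e a b + 1)) ⊆ t b := fun a ha haH b hb c hc hab hbc x hx =>
    by_contra fun hxb => hbad' a ha haH
      (Or.inr (mem_biUnion hb (mem_biUnion hc ⟨hab, hbc, x, ⟨hx.1, hxb⟩, hx.2⟩)))
  refine hG.union hH (fun x hx y hy hyG => hlt x hx y hy fun hyR => hyG (hRG hyR))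
    (fun a ha b hb => hm ▸ le_edgeBound ha hb) (fun y hy _ => ?_) hlow hsplit
  obtain ⟨x, hx, hxy⟩ := Finset.mem_image.1 (hprof (Finset.mem_image_of_mem _ hy))
  obtain ⟨hrow, htrace⟩ := profile_eq_iff.1 hxy
  refine ⟨x, hx, fun r hr hrH hry => ?_, fun k hk => ?_⟩
  · obtain ⟨he, hlt⟩ := hrow r (hGH r hr hrH)
    exact ⟨hlt.2 hry, he⟩
  · have hsub : Ico (I k) (I (k + 1)) ⊆ Iio (I (m + 1)) :=
      fun n hn => hn.2.trans_le (hI (Nat.succ_le_succ hk))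
    rw [← inter_eq_right.2 hsub, ← inter_assoc, htrace, inter_assoc]

theorem tower_coloring_ccc_general
    (e : Ordinal → Ordinal → ℕ)
    (coh1 : ∀ β, β < omega1 → Set.InjOn (fun α => e α β) (Set.Iio β))
    (t : Ordinal → Set ℕ)
    (htower : ∀ α β : Ordinal, α < β → β < omega1 → (t β \ t α).Finite)
    (I : ℕ → ℕ) (hI : StrictMono I) :
    ∀ 𝒜 : Set (Finset Ordinal),
      (∀ F ∈ 𝒜, (↑F : Set Ordinal) ⊆ Set.Iio omega1 ∧ Homog3 e t I ↑F) →
      ¬𝒜.Countable →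
      ∃ F ∈ 𝒜, ∃ G ∈ 𝒜, F ≠ G ∧ Homog3 e t I (↑F ∪ ↑G) := by
  intro 𝒜 h𝒜 h𝒜c
  obtain ⟨ℬ, hℬ𝒜, R, hℬc, hRℬ, hthin⟩ := exists_not_countable_rooted_subfamily h𝒜c
  have hω : ∀ F ∈ ℬ, (↑F : Set Ordinal) ⊆ Iio omega1 := fun F hF => (h𝒜 F (hℬ𝒜 hF)).1
  obtain ⟨⟨m, P⟩, h𝒞c⟩ := exists_not_countable_fiber hℬc fun F =>
    (edgeBound e F, F.image (profile e t (I (edgeBound e F + 1)) R))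
  have hbad : ∀ H ∈ ℬ, (lowSet e m H ∪ splitSet e t I H).Finite := fun H hH =>
    have hinj : ∀ y ∈ H, InjOn (fun α => e α y) (Iio y) := fun y hy => coh1 y (hω H hH hy)
    (lowSet_finite hinj m).union
      (splitSet_finite hinj hI fun b _ c hc hbc => htower b c hbc (hω H hH hc))
  obtain ⟨G, ⟨hGℬ, hGkey⟩, H, ⟨hHℬ, hHkey⟩, hGH, hlt, hGHbad⟩ :=
    exists_pair_lt_tail_disjoint h𝒞c (fun F hF => hω F hF.1)
      (fun x hx => (hthin x hx).mono (by rintro F ⟨⟨hF, -⟩, hxF⟩; exact ⟨hF, hxF⟩))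
      _ fun H hH => hbad H hH.1
  obtain ⟨hGm, hGP⟩ := Prod.mk.inj hGkey
  obtain ⟨hHm, hHP⟩ := Prod.mk.inj hHkey
  rw [hGm] at hGP
  rw [hHm] at hHP
  exact ⟨G, hℬ𝒜 hGℬ, H, hℬ𝒜 hHℬ, hGH, Homog3.union_of_profile hI.monotone
    (h𝒜 G (hℬ𝒜 hGℬ)).2 (h𝒜 H (hℬ𝒜 hHℬ)).2 (hRℬ G hGℬ) (hRℬ H hHℬ) hlt hGm
    (hHP.trans hGP.symm).subset hGHbad⟩

/-- Assume every ccc poset has property K₃, let `e` satisfy (coh1)-(coh3) (hence be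
coherent), let `t` be a tower and `I ∈ [ω]^ω` with `t_α ∩ I_m ≠ ∅` for all `α, m`. Then
the poset `ℋ₀^π` of finite 0-homogeneous sets (for the coloring `π` above) ordered by
reverse inclusion is ccc: among uncountably many finite 0-homogeneous subsets of `ω₁`
there are two distinct ones whose union is 0-homogeneous. -/
theorem tower_coloring_ccc
    (hK3 : ∀ (Q : Type 1) [PartialOrder Q],
      (∀ X : Set Q, ¬X.Countable → ∃ p ∈ X, ∃ q ∈ X, p ≠ q ∧ ∃ r, r ≤ p ∧ r ≤ q) →
      ∀ X : Set Q, ¬X.Countable → ∃ Y ⊆ X, ¬Y.Countable ∧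
        ∀ s : Finset Q, ↑s ⊆ Y → s.card ≤ 3 → ∃ r, ∀ q ∈ s, r ≤ q)
    (e : Ordinal → Ordinal → ℕ)
    (coh1 : ∀ β, β < omega1 → Set.InjOn (fun α => e α β) (Set.Iio β))
    (coh2 : ∀ α β γ : Ordinal, α < β → β < γ → γ < omega1 →
      e α β ≠ e α γ → max (e α β) (e α γ) ≤ e β γ)
    (coh3 : ∀ α β γ : Ordinal, α < β → β < γ → γ < omega1 → e α β ≠ e β γ)
    (hcoh : ∀ β γ : Ordinal, β < γ → γ < omega1 →
      {ξ : Ordinal | ξ < β ∧ e ξ β ≠ e ξ γ}.Finite)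
    (t : Ordinal → Set ℕ)
    (htinf : ∀ α, α < omega1 → (t α).Infinite)
    (htower : ∀ α β : Ordinal, α < β → β < omega1 → (t β \ t α).Finite)
    (I : ℕ → ℕ) (hI : StrictMono I)
    (hmeet : ∀ α, α < omega1 → ∀ m : ℕ, (t α ∩ Set.Ico (I m) (I (m + 1))).Nonempty) :
    ∀ 𝒜 : Set (Finset Ordinal),
      (∀ F ∈ 𝒜, (↑F : Set Ordinal) ⊆ Set.Iio omega1 ∧ Homog3 e t I ↑F) →
      ¬𝒜.Countable →
      ∃ F ∈ 𝒜, ∃ G ∈ 𝒜, F ≠ G ∧ Homog3 e t I (↑F ∪ ↑G) :=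
  tower_coloring_ccc_general e coh1 t htower I hI
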